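/- If u_k ≠ u_* (where u_* is the unique minimizer of a strictly convex f over U) and u_k is feasible, then at least one block satisfies v̄ⁱ(u_k) ≠ uⁱ_k, and consequently the PCDM iteration strictly decreases the objective: f(u_{k+1}) < f(u_k). -/

import Mathlib

/-!
If no block moves (`v̄ⁱ = uⁱ` for all `i`), each `uⁱ` minimizes the block model
`⟪∇ᵢf(u), v - uⁱ⟫ + Lᵢ/2 ‖v - uⁱ‖²` over the convex set `Uⁱ`, which forces
`⟪∇ᵢf(u), v - uⁱ⟫ ≥ 0`; summing over the blocks and using convexity of `f` makes `u` a minimizer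
of `f` on `U`, i.e. `u = u_*`. Otherwise the descent lemma gives `f(ūⁱ) ≤ f(u) + (model value)`,
the model value is `≤ 0` for every block and `< 0` for a moving one, and `u_{k+1}` is the average
of the `ūⁱ`, so Jensen's inequality gives the strict decrease.
-/

open scoped RealInnerProductSpace

noncomputable abbrev FullSpace (M : ℕ) (n : Fin M → ℕ) :=
  PiLp 2 (fun i : Fin M => EuclideanSpace ℝ (Fin (n i)))

noncomputable def blockEmb {M : ℕ} {n : Fin M → ℕ} (i : Fin M)
    (h : EuclideanSpace ℝ (Fin (n i))) : FullSpace M n :=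
  (WithLp.equiv 2 _).symm (Pi.single i h)

open Set Filter Topology

theorem ConvexOn.inner_gradient_le_sub {E : Type*} [NormedAddCommGroup E]
    [InnerProductSpace ℝ E] [CompleteSpace E] {f : E → ℝ} (hf : ConvexOn ℝ univ f) {x : E}
    (hfx : DifferentiableAt ℝ f x) (y : E) :
    ⟪gradient f x, y - x⟫ ≤ f y - f x := by
  have hx : HasFDerivAt f (InnerProductSpace.toDual ℝ E (gradient f x))
      ((AffineMap.lineMap x y : ℝ →ᵃ[ℝ] E) 0) := by
    simpa using hfx.hasGradientAt.hasFDerivAt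
  have hline : HasDerivAt (f ∘ (AffineMap.lineMap x y : ℝ →ᵃ[ℝ] E)) ⟪gradient f x, y - x⟫ 0 := by
    simpa using hx.comp_hasDerivAt (0 : ℝ) (AffineMap.hasDerivAt_lineMap (𝕜 := ℝ) (a := x) (b := y))
  simpa [slope_def_field] using
    (hf.comp_affineMap (AffineMap.lineMap x y : ℝ →ᵃ[ℝ] E)).le_slope_of_hasDerivAt trivial trivial
      zero_lt_one hline

theorem nonneg_of_forall_add_mul_nonneg {a b : ℝ} (h : ∀ t ∈ Ioc (0 : ℝ) 1, 0 ≤ a + t * b) :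
    0 ≤ a := by
  have hlim : Tendsto (fun t : ℝ => a + t * b) (𝓝[>] 0) (𝓝 a) := by
    have : Continuous (fun t : ℝ => a + t * b) := by fun_prop
    simpa using (this.tendsto 0).mono_left nhdsWithin_le_nhds
  exact ge_of_tendsto hlim (eventually_of_mem (Ioc_mem_nhdsGT one_pos) h)

theorem ConvexOn.map_average_lt {E ι : Type*} [AddCommGroup E] [Module ℝ E] [Fintype ι]
    {s : Set E} {f : E → ℝ} (hf : ConvexOn ℝ s f) {y : ι → E} (hy : ∀ i, y i ∈ s) {c : ℝ}
    (hle : ∀ i, f (y i) ≤ c) (hlt : ∃ i, f (y i) < c) :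
    f ((Fintype.card ι : ℝ)⁻¹ • ∑ i, y i) < c := by
  obtain ⟨i₀, hi₀⟩ := hlt
  have hcard : (0 : ℝ) < Fintype.card ι := by
    exact_mod_cast Fintype.card_pos_iff.mpr ⟨i₀⟩
  have hw : ∑ _i : ι, (Fintype.card ι : ℝ)⁻¹ = 1 := by
    simp [Finset.card_univ, hcard.ne']
  calc f ((Fintype.card ι : ℝ)⁻¹ • ∑ i, y i)
      ≤ ∑ i, (Fintype.card ι : ℝ)⁻¹ * f (y i) := by
        rw [Finset.smul_sum]
        exact hf.map_sum_le (fun _ _ => by positivity) hw (fun i _ => hy i)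
    _ < ∑ _i : ι, (Fintype.card ι : ℝ)⁻¹ * c :=
        Finset.sum_lt_sum (fun i _ => by gcongr; exact hle i)
          ⟨i₀, Finset.mem_univ _, by gcongr⟩
    _ = c := by rw [← Finset.sum_mul, hw, one_mul]

section QuadModel

variable {E : Type*} [NormedAddCommGroup E] [InnerProductSpace ℝ E]

/-- PCDM moves block `i` of `u` to `v̄ⁱ(u)`, a minimizer of `quadModel (∇ᵢf(u)) Lᵢ uⁱ` over `Uⁱ`. -/
noncomputable def quadModel (g : E) (L : ℝ) (x v : E) : ℝ :=
  ⟪g, v - x⟫ + L / 2 * ‖v - x‖ ^ 2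

variable {S : Set E} {g x w : E} {L : ℝ}

theorem IsMinOn.quadModel_nonpos (h : IsMinOn (quadModel g L x) S w) (hx : x ∈ S) :
    quadModel g L x w ≤ 0 := by
  simpa [quadModel] using isMinOn_iff.mp h x hx

theorem IsMinOn.quadModel_neg (h : IsMinOn (quadModel g L x) S w) (hS : Convex ℝ S)
    (hx : x ∈ S) (hw : w ∈ S) (hL : 0 < L) (hwx : w ≠ x) :
    quadModel g L x w < 0 := by
  -- the midpoint of `x` and `w` has model value `⟪g, w - x⟫ / 2 + L / 8 ‖w - x‖²`
  have hmid := isMinOn_iff.mp h ((1 / 2 : ℝ) • w + (1 / 2 : ℝ) • x)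
    (hS hw hx (by norm_num) (by norm_num) (by norm_num))
  have hsub : (1 / 2 : ℝ) • w + (1 / 2 : ℝ) • x - x = (1 / 2 : ℝ) • (w - x) := by module
  rw [quadModel, quadModel, hsub, real_inner_smul_right, norm_smul, mul_pow] at hmid
  have hpos : 0 < ‖w - x‖ ^ 2 := by positivity [sub_ne_zero.mpr hwx]
  norm_num at hmid
  rw [quadModel]
  nlinarith

theorem IsMinOn.inner_nonneg_of_quadModel (h : IsMinOn (quadModel g L x) S x) (hS : Convex ℝ S)
    (hx : x ∈ S) {v : E} (hv : v ∈ S) :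
    0 ≤ ⟪g, v - x⟫ := by
  refine nonneg_of_forall_add_mul_nonneg (b := L / 2 * ‖v - x‖ ^ 2) fun t ⟨ht0, ht1⟩ => ?_
  have hvt := isMinOn_iff.mp h (x + t • (v - x)) (hS.add_smul_sub_mem hx hv ⟨ht0.le, ht1⟩)
  rw [quadModel, quadModel, add_sub_cancel_left, sub_self, inner_zero_right, norm_zero,
    real_inner_smul_right, norm_smul, Real.norm_of_nonneg ht0.le] at hvt
  have : 0 ≤ t * (⟪g, v - x⟫ + t * (L / 2 * ‖v - x‖ ^ 2)) := by linarith
  exact nonneg_of_mul_nonneg_right this ht0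

end QuadModel

theorem sum_blockEmb {M : ℕ} {n : Fin M → ℕ} (h : (i : Fin M) → EuclideanSpace ℝ (Fin (n i))) :
    ∑ i, blockEmb i (h i) = WithLp.toLp 2 h := by
  simp [blockEmb, ← WithLp.toLp_sum, Finset.univ_sum_single]

theorem inv_smul_sum_blockUpdate_apply {M : ℕ} {n : Fin M → ℕ} (hM : 0 < M) (u : FullSpace M n)
    (v : (i : Fin M) → EuclideanSpace ℝ (Fin (n i))) (j : Fin M) :
    ((M : ℝ)⁻¹ • ∑ i, (u + blockEmb i (v i - u i))) j
      = (1 / (M : ℝ)) • v j + (((M : ℝ) - 1) / (M : ℝ)) • u j := by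
  have hM' : (M : ℝ) ≠ 0 := by positivity
  rw [Finset.sum_add_distrib, sum_blockEmb]
  simp only [Finset.sum_const, Finset.card_univ, Fintype.card_fin, PiLp.smul_apply,
    PiLp.add_apply, ← Nat.cast_smul_eq_nsmul ℝ]
  match_scalars <;> field_simp; ring

theorem pcdm_strict_decrease_general {M : ℕ} {n : Fin M → ℕ}
    (f : FullSpace M n → ℝ)
    (hstrict : StrictConvexOn ℝ Set.univ f) (hf : Differentiable ℝ f)
    (L : Fin M → ℝ) (hL : ∀ i, 0 < L i)
    (hdesc : ∀ (i : Fin M) (u : FullSpace M n) (h : EuclideanSpace ℝ (Fin (n i))),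
      f (u + blockEmb i h) ≤ f u + ⟪gradient f u i, h⟫ + L i / 2 * ‖h‖ ^ 2)
    (U : (i : Fin M) → Set (EuclideanSpace ℝ (Fin (n i))))
    (hUconvex : ∀ i, Convex ℝ (U i))
    (ustar : FullSpace M n) (hstarU : ∀ i, ustar i ∈ U i)
    (hstarmin : ∀ w : FullSpace M n, (∀ i, w i ∈ U i) → w ≠ ustar → f ustar < f w)
    (uk : FullSpace M n) (hukU : ∀ i, uk i ∈ U i) (hne : uk ≠ ustar)
    (vbar : (i : Fin M) → EuclideanSpace ℝ (Fin (n i)))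
    (hvbarU : ∀ i, vbar i ∈ U i)
    (hmin : ∀ i, ∀ v ∈ U i,
      ⟪gradient f uk i, vbar i - uk i⟫ + L i / 2 * ‖vbar i - uk i‖ ^ 2 ≤
        ⟪gradient f uk i, v - uk i⟫ + L i / 2 * ‖v - uk i‖ ^ 2)
    (uk1 : FullSpace M n)
    (hupd : ∀ i, uk1 i = (1 / (M : ℝ)) • vbar i + (((M : ℝ) - 1) / (M : ℝ)) • uk i) :
    (∃ i, vbar i ≠ uk i) ∧ f uk1 < f uk := by
  have hconv := hstrict.convexOn
  have hvbar : ∀ i, IsMinOn (quadModel (gradient f uk i) (L i) (uk i)) (U i) (vbar i) :=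
    fun i => isMinOn_iff.mpr (hmin i)
  have hmoves : ∃ i, vbar i ≠ uk i := by
    by_contra! hfixed
    have hopt : 0 ≤ ⟪gradient f uk, ustar - uk⟫ := by
      rw [PiLp.inner_apply]
      exact Finset.sum_nonneg fun i _ =>
        (hfixed i ▸ hvbar i).inner_nonneg_of_quadModel (hUconvex i) (hukU i) (hstarU i)
    have := hconv.inner_gradient_le_sub (hf uk) ustar
    exact (hstarmin uk hukU hne).not_ge (by linarith)
  refine ⟨hmoves, ?_⟩
  have hM : 0 < M := hmoves.elim fun i _ => i.pos
  have hblock : ∀ i, f (uk + blockEmb i (vbar i - uk i))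
      ≤ f uk + quadModel (gradient f uk i) (L i) (uk i) (vbar i) := fun i =>
    (hdesc i uk _).trans_eq (add_assoc _ _ _)
  have havg : uk1 = (Fintype.card (Fin M) : ℝ)⁻¹ • ∑ i, (uk + blockEmb i (vbar i - uk i)) := by
    ext1 j
    rw [Fintype.card_fin, inv_smul_sum_blockUpdate_apply hM, hupd]
  rw [havg]
  refine hconv.map_average_lt (fun _ => Set.mem_univ _)
    (fun i => (hblock i).trans ?_) (hmoves.imp fun i hi => (hblock i).trans_lt ?_)
  · linarith [(hvbar i).quadModel_nonpos (hukU i)]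
  · linarith [(hvbar i).quadModel_neg (hUconvex i) (hukU i) (hvbarU i) (hL i) hi]

/-- away from the unique minimizer, some block update is nontrivial and
the PCDM iteration strictly decreases the objective. -/
theorem pcdm_strict_decrease {M : ℕ} {n : Fin M → ℕ} (hM : 0 < M)
    (f : FullSpace M n → ℝ)
    (hstrict : StrictConvexOn ℝ Set.univ f) (hf : Differentiable ℝ f)
    (L : Fin M → ℝ) (hL : ∀ i, 0 < L i)
    (hdesc : ∀ (i : Fin M) (u : FullSpace M n) (h : EuclideanSpace ℝ (Fin (n i))),
      f (u + blockEmb i h) ≤ f u + ⟪gradient f u i, h⟫ + L i / 2 * ‖h‖ ^ 2)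
    (U : (i : Fin M) → Set (EuclideanSpace ℝ (Fin (n i))))
    (hUclosed : ∀ i, IsClosed (U i)) (hUconvex : ∀ i, Convex ℝ (U i))
    (ustar : FullSpace M n) (hstarU : ∀ i, ustar i ∈ U i)
    (hstarmin : ∀ w : FullSpace M n, (∀ i, w i ∈ U i) → w ≠ ustar → f ustar < f w)
    (uk : FullSpace M n) (hukU : ∀ i, uk i ∈ U i) (hne : uk ≠ ustar)
    (vbar : (i : Fin M) → EuclideanSpace ℝ (Fin (n i)))
    (hvbarU : ∀ i, vbar i ∈ U i)
    (hmin : ∀ i, ∀ v ∈ U i,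
      ⟪gradient f uk i, vbar i - uk i⟫ + L i / 2 * ‖vbar i - uk i‖ ^ 2 ≤
        ⟪gradient f uk i, v - uk i⟫ + L i / 2 * ‖v - uk i‖ ^ 2)
    (uk1 : FullSpace M n)
    (hupd : ∀ i, uk1 i = (1 / (M : ℝ)) • vbar i + (((M : ℝ) - 1) / (M : ℝ)) • uk i) :
    (∃ i, vbar i ≠ uk i) ∧ f uk1 < f uk :=
  pcdm_strict_decrease_general f hstrict hf L hL hdesc U hUconvex ustar hstarU hstarmin uk hukU hne
    vbar hvbarU hmin uk1 hupd
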